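/- If an observation table T in the L* algorithm for Mealy machines is closed and consistent with a target machine that has n states, then the number of state representatives |S_Q| is at most n. -/
import Mathlib


structure Mealy (Q I O : Type) where
  init : Q
  step : Q → I → Q
  out : Q → I → O

def Mealy.outs {Q I O : Type} (M : Mealy Q I O) : Q → List I → List O
  | _, [] => []
  | q, i :: w => M.out q i :: M.outs (M.step q i) w

def Mealy.steps {Q I O : Type} (M : Mealy Q I O) : Q → List I → Q
  | q, [] => q
  | q, i :: w => M.steps (M.step q i) w

/-- The suffix of length `n` of a list. -/
def lastN {α : Type} (l : List α) (n : ℕ) : List α := l.drop (l.length - n)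

/-- Observation-table entry: `T(w)(e)` is the last `|e|` outputs of the
target machine on `w · e`. -/
def tableRow {Q I O : Type} (M : Mealy Q I O) (w e : List I) : List O :=
  lastN (M.outs M.init (w ++ e)) e.length

theorem stmt_14 {Q I O : Type} [Fintype Q] (M : Mealy Q I O)
    (SQ : Finset (List I)) (E : Set (List I))
    (hdist : ∀ w ∈ SQ, ∀ w' ∈ SQ, w ≠ w' →
      ∃ e ∈ E, tableRow M w e ≠ tableRow M w' e) :
    SQ.card ≤ Fintype.card Q := by
  classical
  have happ : ∀ (q : Q) (w e : List I),
      M.outs q (w ++ e) = M.outs q w ++ M.outs (M.steps q w) e := by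
    intro q w
    induction w generalizing q with
    | nil => intro e; simp [Mealy.outs, Mealy.steps]
    | cons i t ih => intro e; simp [Mealy.outs, Mealy.steps, ih]
  have hlen : ∀ (q : Q) (w : List I), (M.outs q w).length = w.length := by
    intro q w
    induction w generalizing q with
    | nil => simp [Mealy.outs]
    | cons i t ih => simp [Mealy.outs, ih]
  have hrow : ∀ w e, tableRow M w e = M.outs (M.steps M.init w) e := by
    intro w e
    simp [tableRow, lastN, happ, hlen, List.drop_left']
  have hinj : Set.InjOn (fun w => M.steps M.init w) SQ := by
    intro w hw w' hw' h
    by_contra hne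
    obtain ⟨e, _, hne2⟩ := hdist w hw w' hw' hne
    exact hne2 (by rw [hrow, hrow]; simp only [] at h; rw [h])
  calc SQ.card ≤ (SQ.image (fun w => M.steps M.init w)).card :=
        Finset.card_le_card_of_injOn _ (fun a ha => Finset.mem_image_of_mem _ ha) hinj
    _ ≤ Fintype.card Q := Finset.card_le_univ _ |>.trans (by simp)
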